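/- arXiv:2202.12394 — 3 statements merged into one kernel-verified Lean document; each statement's English description precedes it below -/
import Mathlib

section
/- For all t > 0, (P(t))² < 1 - e^{-2t²/π}, where P(t) = (1/√(2π)) ∫_{-t}^{t} e^{-x²/2} dx. Equivalently, the parameter k(t) defined by P(t)² = 1 - e^{-k(t)²t²/2} satisfies k(t) < √(4/π). -/
/-!
Up to the factor `(2π)⁻¹`, `P t ^ 2` is the integral of the planar Gaussian `exp (-|p|² / 2)` over
the square `[-t, t]²`. The open disk of radius `R = 2t / √π` has the same area `4t²`, and it is
exactly the set where the Gaussian exceeds `exp (-R² / 2)`. Trading the square minus the disk for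
the disk minus the square (two sets of equal measure, nonnull because `R > t`) therefore strictly
increases the integral, and in polar coordinates the integral over the disk is
`2π (1 - exp (-R² / 2)) = 2π (1 - exp (-2t² / π))`.
-/

open Real MeasureTheory

noncomputable def P (t : ℝ) : ℝ := (1 / Real.sqrt (2 * π)) * ∫ x in (-t)..t, Real.exp (-x ^ 2 / 2)

open Set

theorem MeasureTheory.setIntegral_lt_setIntegral_of_measure_eq {α : Type*} [MeasurableSpace α]
    {μ : Measure α} {f : α → ℝ} {S B : Set α} {c : ℝ}
    (hfS : IntegrableOn f S μ) (hfB : IntegrableOn f B μ)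
    (hS : MeasurableSet S) (hB : MeasurableSet B) (hμ : μ S = μ B) (hS_fin : μ S ≠ ⊤)
    (h_out : ∀ p ∈ S \ B, f p ≤ c) (h_in : ∀ p ∈ B \ S, c < f p) (hpos : 0 < μ (B \ S)) :
    ∫ p in S, f p ∂μ < ∫ p in B, f p ∂μ := by
  have hSB_fin : μ (S \ B) ≠ ⊤ := measure_ne_top_of_subset sdiff_subset hS_fin
  have hBS_fin : μ (B \ S) ≠ ⊤ := measure_ne_top_of_subset sdiff_subset (hμ ▸ hS_fin)
  have h_symm : μ.real (S \ B) = μ.real (B \ S) := by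
    rw [measureReal_def, measureReal_def, measure_sdiff_symm hS.nullMeasurableSet
      hB.nullMeasurableSet hμ (measure_ne_top_of_subset inter_subset_left hS_fin)]
  have h_upper : ∫ p in S \ B, f p ∂μ ≤ μ.real (S \ B) * c := by
    simpa [setIntegral_const, mul_comm] using
      setIntegral_mono_on (hfS.mono_set sdiff_subset) (integrableOn_const hSB_fin)
        (hS.diff hB) h_out
  have h_lower : μ.real (B \ S) * c < ∫ p in B \ S, f p ∂μ := by
    have hint : IntegrableOn (fun p => f p - c) (B \ S) μ :=
      (hfB.mono_set sdiff_subset).sub (integrableOn_const hBS_fin)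
    have hnonneg : 0 ≤ᵐ[μ.restrict (B \ S)] fun p => f p - c :=
      (ae_restrict_iff' (hB.diff hS)).2 (ae_of_all _ fun p hp => sub_nonneg.2 (h_in p hp).le)
    have hsupp : Function.support (fun p => f p - c) ∩ (B \ S) = B \ S :=
      inter_eq_right.2 fun p hp => sub_ne_zero.2 (h_in p hp).ne'
    have := (setIntegral_pos_iff_support_of_nonneg_ae hnonneg hint).2 (by rwa [hsupp])
    rw [integral_sub (hfB.mono_set sdiff_subset) (integrableOn_const hBS_fin),
      setIntegral_const, smul_eq_mul] at this
    linarith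
  rw [← integral_inter_add_sdiff hB hfS, ← integral_inter_add_sdiff hS hfB, inter_comm B S]
  rw [h_symm] at h_upper
  linarith

theorem integral_comp_sq_add_sq (G : ℝ → ℝ) :
    ∫ p : ℝ × ℝ, G (p.1 ^ 2 + p.2 ^ 2) = 2 * π * ∫ r in Ioi 0, r * G (r ^ 2) := by
  rw [← integral_comp_polarCoord_symm]
  have h_polar : EqOn
      (fun p : ℝ × ℝ => p.1 • G ((polarCoord.symm p).1 ^ 2 + (polarCoord.symm p).2 ^ 2))
      (fun p => (p.1 * G (p.1 ^ 2)) * 1) polarCoord.target := by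
    intro p _
    simp only [polarCoord_symm_apply, mul_pow, ← mul_add, cos_sq_add_sin_sq, mul_one, smul_eq_mul]
  rw [setIntegral_congr_fun polarCoord.open_target.measurableSet h_polar, polarCoord_target,
    Measure.volume_eq_prod, setIntegral_prod_mul (fun r => r * G (r ^ 2)) (fun _ => (1 : ℝ)),
    setIntegral_const, measureReal_def, volume_Ioo,
    ENNReal.toReal_ofReal (by linarith [pi_pos]), smul_eq_mul]
  ring

theorem setIntegral_disk_comp_sq_add_sq (g : ℝ → ℝ) {R : ℝ} (hR : 0 ≤ R) :
    ∫ p in {p : ℝ × ℝ | p.1 ^ 2 + p.2 ^ 2 < R ^ 2}, g (p.1 ^ 2 + p.2 ^ 2) =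
      2 * π * ∫ r in 0..R, r * g (r ^ 2) := by
  have h_meas : MeasurableSet {p : ℝ × ℝ | p.1 ^ 2 + p.2 ^ 2 < R ^ 2} :=
    measurableSet_lt (by fun_prop) measurable_const
  have h_radial : EqOn (fun r => r * (Iio (R ^ 2)).indicator g (r ^ 2))
      ((Iio R).indicator fun r => r * g (r ^ 2)) (Ioi 0) := by
    intro r (hr : 0 < r)
    by_cases hrR : r < R
    · simp [indicator, hrR, pow_lt_pow_left₀ hrR hr.le two_ne_zero]
    · simp [indicator, hrR, (pow_le_pow_left₀ hR (not_lt.1 hrR) 2).not_gt]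
  rw [← integral_indicator h_meas]
  have h_pull :
      {p : ℝ × ℝ | p.1 ^ 2 + p.2 ^ 2 < R ^ 2}.indicator (fun p => g (p.1 ^ 2 + p.2 ^ 2)) =
        fun p => (Iio (R ^ 2)).indicator g (p.1 ^ 2 + p.2 ^ 2) :=
    funext fun _ => indicator_comp_right (s := Iio (R ^ 2)) (fun p : ℝ × ℝ => p.1 ^ 2 + p.2 ^ 2)
  rw [h_pull, integral_comp_sq_add_sq, setIntegral_congr_fun measurableSet_Ioi h_radial,
    setIntegral_indicator measurableSet_Iio, Ioi_inter_Iio, intervalIntegral.integral_of_le hR,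
    integral_Ioc_eq_integral_Ioo]

theorem volume_disk {R : ℝ} (hR : 0 ≤ R) :
    volume {p : ℝ × ℝ | p.1 ^ 2 + p.2 ^ 2 < R ^ 2} = ENNReal.ofReal (π * R ^ 2) := by
  have h_real : volume.real {p : ℝ × ℝ | p.1 ^ 2 + p.2 ^ 2 < R ^ 2} = π * R ^ 2 := by
    have h := setIntegral_disk_comp_sq_add_sq (fun _ => (1 : ℝ)) hR
    simp only [setIntegral_const, smul_eq_mul, mul_one, integral_id] at h
    rw [h]
    ring
  rcases hR.eq_or_lt with rfl | hR_pos
  · have h_empty : {p : ℝ × ℝ | p.1 ^ 2 + p.2 ^ 2 < 0 ^ 2} = ∅ :=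
      eq_empty_iff_forall_notMem.2 fun p (hp : p.1 ^ 2 + p.2 ^ 2 < 0 ^ 2) => by
        nlinarith [sq_nonneg p.1, sq_nonneg p.2]
    rw [h_empty, measure_empty]
    simp
  -- a disk of infinite measure would have real measure `0`, not `π R²`
  have h_fin : volume {p : ℝ × ℝ | p.1 ^ 2 + p.2 ^ 2 < R ^ 2} ≠ ⊤ :=
    (ENNReal.toReal_pos_iff.1 (by
      rw [← measureReal_def, h_real]; exact mul_pos pi_pos (pow_pos hR_pos 2))).2.ne
  rw [← h_real, measureReal_def, ENNReal.ofReal_toReal h_fin]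

theorem hasDerivAt_neg_exp_neg_sq_div_two (x : ℝ) :
    HasDerivAt (fun r => -exp (-r ^ 2 / 2)) (x * exp (-x ^ 2 / 2)) x := by
  have h := ((hasDerivAt_pow 2 x).neg.div_const 2).exp.neg
  exact h.congr_deriv
    (by simp only [Pi.neg_apply, Nat.cast_ofNat, Nat.add_one_sub_one, pow_one]; ring)

theorem setIntegral_disk_gaussian {R : ℝ} (hR : 0 ≤ R) :
    ∫ p in {p : ℝ × ℝ | p.1 ^ 2 + p.2 ^ 2 < R ^ 2}, exp (-(p.1 ^ 2 + p.2 ^ 2) / 2) =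
      2 * π * (1 - exp (-R ^ 2 / 2)) := by
  rw [setIntegral_disk_comp_sq_add_sq (fun u => exp (-u / 2)) hR,
    intervalIntegral.integral_eq_sub_of_hasDerivAt (fun x _ => hasDerivAt_neg_exp_neg_sq_div_two x)
      (by apply Continuous.intervalIntegrable; fun_prop),
    zero_pow two_ne_zero, neg_zero, zero_div, exp_zero]
  ring

theorem integrable_exp_neg_sq_add_sq_div_two :
    Integrable fun p : ℝ × ℝ => exp (-(p.1 ^ 2 + p.2 ^ 2) / 2) := by
  have h := (integrable_exp_neg_mul_sq (b := 1 / 2) (by norm_num)).mul_prod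
    (integrable_exp_neg_mul_sq (b := 1 / 2) (by norm_num))
  rw [← Measure.volume_eq_prod] at h
  refine h.congr (.of_forall fun p => ?_)
  simp only [← exp_add]
  ring_nf

theorem P_sq_eq_setIntegral_square {t : ℝ} (ht : 0 ≤ t) :
    P t ^ 2 = (2 * π)⁻¹ * ∫ p in Icc (-t) t ×ˢ Icc (-t) t, exp (-(p.1 ^ 2 + p.2 ^ 2) / 2) := by
  have h_split : ∀ p : ℝ × ℝ,
      exp (-(p.1 ^ 2 + p.2 ^ 2) / 2) = exp (-p.1 ^ 2 / 2) * exp (-p.2 ^ 2 / 2) := by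
    intro p; rw [← exp_add]; ring_nf
  simp only [h_split]
  rw [Measure.volume_eq_prod,
    setIntegral_prod_mul (fun x => exp (-x ^ 2 / 2)) (fun x => exp (-x ^ 2 / 2)),
    integral_Icc_eq_integral_Ioc, ← intervalIntegral.integral_of_le (by linarith), P, mul_pow,
    div_pow, sq_sqrt (by positivity)]
  ring

theorem setIntegral_square_lt_setIntegral_disk_gaussian {t R : ℝ} (ht : 0 < t) (hR : 0 ≤ R)
    (h_area : π * R ^ 2 = 4 * t ^ 2) :
    ∫ p in Icc (-t) t ×ˢ Icc (-t) t, exp (-(p.1 ^ 2 + p.2 ^ 2) / 2) <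
      ∫ p in {p : ℝ × ℝ | p.1 ^ 2 + p.2 ^ 2 < R ^ 2}, exp (-(p.1 ^ 2 + p.2 ^ 2) / 2) := by
  set S := Icc (-t) t ×ˢ Icc (-t) t
  set B := {p : ℝ × ℝ | p.1 ^ 2 + p.2 ^ 2 < R ^ 2}
  have htR : t < R := by
    have h_sq : t ^ 2 < R ^ 2 := by
      nlinarith [mul_lt_mul_of_pos_right pi_lt_four (pow_pos ht 2), pi_pos]
    nlinarith
  have hB_open : IsOpen B := isOpen_lt (by fun_prop) continuous_const
  have hS_vol : volume S = ENNReal.ofReal (4 * t ^ 2) := by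
    rw [Measure.volume_eq_prod, Measure.prod_prod, Real.volume_Icc,
      ← ENNReal.ofReal_mul (by linarith)]
    ring_nf
  have h_gap : 0 < volume (B \ S) := by
    refine (hB_open.sdiff (isClosed_Icc.prod isClosed_Icc)).measure_pos _
      ⟨((t + R) / 2, 0), ?_, fun h => by linarith [h.1.2]⟩
    show ((t + R) / 2) ^ 2 + 0 ^ 2 < R ^ 2
    nlinarith
  refine setIntegral_lt_setIntegral_of_measure_eq (c := exp (-R ^ 2 / 2))
    integrable_exp_neg_sq_add_sq_div_two.integrableOn
    integrable_exp_neg_sq_add_sq_div_two.integrableOn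
    (measurableSet_Icc.prod measurableSet_Icc) hB_open.measurableSet
    (by rw [hS_vol, volume_disk hR, h_area]) (by rw [hS_vol]; exact ENNReal.ofReal_ne_top)
    (fun p hp => exp_le_exp.2 ?_) (fun p hp => exp_lt_exp.2 ?_) h_gap
  · linarith [not_lt.1 (show ¬p.1 ^ 2 + p.2 ^ 2 < R ^ 2 from hp.2)]
  · linarith [show p.1 ^ 2 + p.2 ^ 2 < R ^ 2 from hp.1]

theorem P_sq_lt_sharp (t : ℝ) (ht : 0 < t) :
    P t ^ 2 < 1 - Real.exp (-2 * t ^ 2 / π) := by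
  set R := 2 * t / √π
  have hR_sq : R ^ 2 = 4 * t ^ 2 / π := by rw [div_pow, sq_sqrt pi_pos.le]; ring
  have hR : 0 ≤ R := by positivity
  calc P t ^ 2 = (2 * π)⁻¹ * ∫ p in Icc (-t) t ×ˢ Icc (-t) t, exp (-(p.1 ^ 2 + p.2 ^ 2) / 2) :=
        P_sq_eq_setIntegral_square ht.le
    _ < (2 * π)⁻¹ * ∫ p in {p : ℝ × ℝ | p.1 ^ 2 + p.2 ^ 2 < R ^ 2},
          exp (-(p.1 ^ 2 + p.2 ^ 2) / 2) := by
        gcongr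
        exact setIntegral_square_lt_setIntegral_disk_gaussian ht hR
          (by rw [hR_sq]; field_simp)
    _ = 1 - exp (-2 * t ^ 2 / π) := by
        rw [setIntegral_disk_gaussian hR, hR_sq]
        field_simp
        ring_nf
end

section
/- For every t > 0 there exist k₁ ∈ (1, 1/cos(π/8)] and k₂ ∈ [1/cos(π/8), √2) such that P(t)² = 1 - (1/2)(e^{-k₁²t²/2} + e^{-k₂²t²/2}), where P(t) = (1/√(2π)) ∫_{-t}^{t} e^{-x²/2} dx. -/
/-!
In polar coordinates the standard Gaussian mass of a region `{r ≤ R(θ)}` is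
`(2π)⁻¹ ∫ (1 - exp (-R(θ)² / 2)) dθ`, and `P t ^ 2` is the mass of the square `[-t, t]²`.
Pairing the directions `θ` and `θ + π/4` amounts to comparing the square with its rotation by
`π/4`: the smaller of the two radii is the radius of their intersection, a regular octagon with
inradius `t` and circumradius `t / cos (π/8)`, and the larger one is the radius of their union,
an eight-pointed star with inradius `t / cos (π/8)` and circumradius `t √2`. Swapping the pair
for its minimum and maximum leaves the sum unchanged, so `2 P t ^ 2` is the sum of the masses
of the octagon and the star. Each mass is an average over `θ` of a disk mass `1 - exp (-k²t²/2)`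
with `k` in the corresponding range, hence equals a disk mass itself by the intermediate value
theorem; the radii are not constant, which makes the outer bounds strict.
-/

open Real MeasureTheory

open Set

lemma integral_mul_exp_neg_sq_div_two (R : ℝ) :
    ∫ r in (0 : ℝ)..R, r * exp (-r ^ 2 / 2) = 1 - exp (-R ^ 2 / 2) := by
  have hderiv (r : ℝ) : HasDerivAt (fun r ↦ -exp (-r ^ 2 / 2)) (r * exp (-r ^ 2 / 2)) r :=
    ((hasDerivAt_pow 2 r).neg.div_const 2).exp.neg.congr_deriv (by simp; ring)
  rw [intervalIntegral.integral_eq_sub_of_hasDerivAt (fun r _ ↦ hderiv r)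
    ((by fun_prop : Continuous fun r : ℝ ↦ r * exp (-r ^ 2 / 2)).intervalIntegrable _ _)]
  simp
  ring

lemma integrable_mul_exp_neg_sq_div_two : Integrable fun r : ℝ ↦ r * exp (-r ^ 2 / 2) := by
  convert integrable_mul_exp_neg_mul_sq one_half_pos using 4
  ring

lemma setIntegral_exp_neg_sq_of_radial {S : Set (ℝ × ℝ)} {R : ℝ → ℝ} (hS : MeasurableSet S)
    (hR : Measurable R) (hR0 : ∀ θ ∈ Ioo (-π) π, 0 ≤ R θ)
    (hSR : ∀ r θ, 0 < r → θ ∈ Ioo (-π) π → (polarCoord.symm (r, θ) ∈ S ↔ r ≤ R θ)) :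
    ∫ p in S, exp (-(p.1 ^ 2 + p.2 ^ 2) / 2) = ∫ θ in (-π)..π, (1 - exp (-R θ ^ 2 / 2)) := by
  set G : ℝ × ℝ → ℝ := {p | p.1 ≤ R p.2}.indicator fun p ↦ p.1 * exp (-p.1 ^ 2 / 2)
  have hG : Integrable G ((volume.restrict (Ioi 0)).prod (volume.restrict (Ioo (-π) π))) := by
    refine Integrable.mono' (integrable_mul_exp_neg_sq_div_two.norm.integrableOn.mul_prod
      (integrable_const (1 : ℝ))) ?_ (Filter.Eventually.of_forall fun p ↦ ?_)
    · exact ((by fun_prop : Measurable fun p : ℝ × ℝ ↦ p.1 * exp (-p.1 ^ 2 / 2)).indicator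
        (measurableSet_le measurable_fst (hR.comp measurable_snd))).aestronglyMeasurable
    · exact (norm_indicator_le_norm_self _ _).trans_eq (mul_one _).symm
  have hpolar : ∀ p ∈ polarCoord.target,
      p.1 • S.indicator (fun q ↦ exp (-(q.1 ^ 2 + q.2 ^ 2) / 2)) (polarCoord.symm p) = G p := by
    rintro ⟨r, θ⟩ ⟨hr, hθ⟩
    have hsq : (r * cos θ) ^ 2 + (r * sin θ) ^ 2 = r ^ 2 := by
      linear_combination r ^ 2 * cos_sq_add_sin_sq θ
    have hmem := hSR r θ hr hθ
    dsimp only [G]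
    by_cases h : r ≤ R θ
    · rw [indicator_of_mem (hmem.2 h), indicator_of_mem (show (r, θ) ∈ {p | p.1 ≤ R p.2} from h),
        polarCoord_symm_apply, smul_eq_mul, hsq]
    · rw [indicator_of_notMem (mt hmem.1 h),
        indicator_of_notMem (show (r, θ) ∉ {p | p.1 ≤ R p.2} from h), smul_zero]
  have hradial : ∀ θ ∈ Ioo (-π) π, ∫ r in Ioi 0, G (r, θ) = 1 - exp (-R θ ^ 2 / 2) := by
    intro θ hθ
    have hG (r : ℝ) : G (r, θ) = (Iic (R θ)).indicator (fun r ↦ r * exp (-r ^ 2 / 2)) r := rfl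
    simp_rw [hG]
    rw [setIntegral_indicator measurableSet_Iic, Ioi_inter_Iic,
      ← intervalIntegral.integral_of_le (hR0 θ hθ), integral_mul_exp_neg_sq_div_two]
  calc ∫ p in S, exp (-(p.1 ^ 2 + p.2 ^ 2) / 2)
      = ∫ p in polarCoord.target,
          p.1 • S.indicator (fun q ↦ exp (-(q.1 ^ 2 + q.2 ^ 2) / 2)) (polarCoord.symm p) := by
        rw [integral_comp_polarCoord_symm, integral_indicator hS]
    _ = ∫ p in Ioi 0 ×ˢ Ioo (-π) π, G p :=
        setIntegral_congr_fun polarCoord.open_target.measurableSet hpolar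
    _ = ∫ θ in Ioo (-π) π, ∫ r in Ioi 0, G (r, θ) := by
        rw [Measure.volume_eq_prod, ← Measure.prod_restrict]
        exact integral_prod_symm G hG
    _ = ∫ θ in (-π)..π, (1 - exp (-R θ ^ 2 / 2)) := by
        rw [setIntegral_congr_fun measurableSet_Ioo hradial, intervalIntegral.integral_of_le
          (by linarith [pi_pos]), integral_Ioc_eq_integral_Ioo]

lemma exists_mem_Ioo_intervalAverage_comp_eq {φ ρ : ℝ → ℝ} {a b lo hi θ₀ θ₁ : ℝ} (hab : a < b)
    (hφc : ContinuousOn φ (Icc lo hi)) (hφ : StrictAntiOn φ (Icc lo hi))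
    (hρc : ContinuousOn ρ (Icc a b)) (hρ : MapsTo ρ (Icc a b) (Icc lo hi))
    (hθ₀ : θ₀ ∈ Icc a b) (hθ₁ : θ₁ ∈ Icc a b) (hlo : lo < ρ θ₀) (hhi : ρ θ₁ < hi) :
    ∃ k ∈ Ioo lo hi, ⨍ θ in a..b, φ (ρ θ) = φ k := by
  have hlohi : lo ≤ hi := (hρ hθ₀).1.trans (hρ hθ₀).2
  have hcomp : ContinuousOn (fun θ ↦ φ (ρ θ)) (Icc a b) := hφc.comp hρc hρ
  have hmem (θ) (hθ : θ ∈ Ioc a b) := hρ (Ioc_subset_Icc_self hθ)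
  have hba : 0 < b - a := sub_pos.2 hab
  have hupper : ⨍ θ in a..b, φ (ρ θ) < φ lo := by
    rw [interval_average_eq, smul_eq_mul, inv_mul_lt_iff₀ hba, ← smul_eq_mul,
      ← intervalIntegral.integral_const]
    refine intervalIntegral.integral_lt_integral_of_continuousOn_of_le_of_exists_lt hab hcomp
      continuousOn_const (fun θ hθ ↦ ?_) ⟨θ₀, hθ₀, hφ ⟨le_rfl, hlohi⟩ (hρ hθ₀) hlo⟩
    exact hφ.antitoneOn ⟨le_rfl, hlohi⟩ (hmem θ hθ) (hmem θ hθ).1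
  have hlower : φ hi < ⨍ θ in a..b, φ (ρ θ) := by
    rw [interval_average_eq, smul_eq_mul, lt_inv_mul_iff₀ hba, ← smul_eq_mul,
      ← intervalIntegral.integral_const]
    refine intervalIntegral.integral_lt_integral_of_continuousOn_of_le_of_exists_lt hab
      continuousOn_const hcomp (fun θ hθ ↦ ?_) ⟨θ₁, hθ₁, hφ (hρ hθ₁) ⟨hlohi, le_rfl⟩ hhi⟩
    exact hφ.antitoneOn (hmem θ hθ) ⟨hlohi, le_rfl⟩ (hmem θ hθ).2
  obtain ⟨k, hk, hφk⟩ := intermediate_value_Ioo' hlohi hφc ⟨hlower, hupper⟩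
  exact ⟨k, hk, hφk.symm⟩

lemma apply_min_add_apply_max {α β : Type*} [LinearOrder α] [AddCommMagma β] (f : α → β)
    (a b : α) : f (min a b) + f (max a b) = f a + f b := by
  rcases le_total a b with h | h
  · rw [min_eq_left h, max_eq_right h]
  · rw [min_eq_right h, max_eq_left h, add_comm]

lemma strictAntiOn_exp_neg_sq_mul_sq {t : ℝ} (ht : t ≠ 0) :
    StrictAntiOn (fun k ↦ exp (-k ^ 2 * t ^ 2 / 2)) (Ici 0) := by
  intro a ha b hb hab
  have hsq : a ^ 2 < b ^ 2 := (sq_lt_sq₀ ha hb).2 hab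
  have ht2 : 0 < t ^ 2 := by positivity
  exact exp_lt_exp.2 (by nlinarith)

lemma one_div_cos_pi_div_eight_pos : 0 < 1 / cos (π / 8) :=
  one_div_pos.2 (cos_pos_of_mem_Ioo ⟨by linarith [pi_pos], by linarith [pi_pos]⟩)

lemma one_div_cos_pi_div_eight_sq : (1 / cos (π / 8)) ^ 2 = 2 / (1 + √2 / 2) := by
  rw [div_pow, one_pow, cos_sq, show 2 * (π / 8) = π / 4 by ring, cos_pi_div_four]
  field_simp

lemma one_div_cos_pi_div_eight_mem_Ioo : 1 / cos (π / 8) ∈ Ioo 1 √2 := by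
  have hs : √2 < 2 := by rw [sqrt_lt' two_pos]; norm_num
  constructor
  · rw [← sq_lt_sq₀ zero_le_one one_div_cos_pi_div_eight_pos.le, one_div_cos_pi_div_eight_sq,
      one_pow, lt_div_iff₀ (by positivity)]
    linarith
  · rw [← sq_lt_sq₀ one_div_cos_pi_div_eight_pos.le (sqrt_nonneg 2),
      one_div_cos_pi_div_eight_sq, sq_sqrt zero_le_two]
    exact div_lt_self two_pos (by linarith [sqrt_pos.2 two_pos])

lemma abs_sin_le_sqrt_two_div_two_iff (x : ℝ) : |sin x| ≤ √2 / 2 ↔ √2 / 2 ≤ |cos x| := by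
  have h : (√2 / 2) ^ 2 = 1 / 2 := by rw [div_pow, sq_sqrt zero_le_two]; norm_num
  rw [← sq_le_sq₀ (abs_nonneg (sin x)) (by positivity),
    ← sq_le_sq₀ (by positivity) (abs_nonneg (cos x)), sq_abs, sq_abs, h]
  constructor <;> intro <;> linarith [sin_sq_add_cos_sq x]

lemma max_abs_cos_abs_sin_sq (θ : ℝ) :
    max |cos θ| |sin θ| ^ 2 = (1 + |cos (2 * θ)|) / 2 := by
  have hpyth := sin_sq_add_cos_sq θ
  rw [cos_two_mul]
  rcases le_total |cos θ| |sin θ| with h | h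
  · have := sq_le_sq.2 h
    rw [max_eq_right h, sq_abs, abs_of_nonpos (by linarith)]
    linarith
  · have := sq_le_sq.2 h
    rw [max_eq_left h, sq_abs, abs_of_nonneg (by linarith)]
    ring

lemma max_abs_cos_abs_sin_pos (θ : ℝ) : 0 < max |cos θ| |sin θ| := by
  have h : 0 < max |cos θ| |sin θ| ^ 2 := by rw [max_abs_cos_abs_sin_sq]; positivity
  exact lt_of_le_of_ne ((abs_nonneg _).trans (le_max_left _ _))
    fun h0 ↦ by rw [← h0] at h; norm_num at h

/-- The distance from the origin to the boundary of `[-1, 1]²` in the direction `θ`. -/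
noncomputable def squareRadius (θ : ℝ) : ℝ := (max |cos θ| |sin θ|)⁻¹

lemma squareRadius_nonneg (θ : ℝ) : 0 ≤ squareRadius θ :=
  inv_nonneg.2 (max_abs_cos_abs_sin_pos θ).le

@[fun_prop]
lemma continuous_squareRadius : Continuous squareRadius :=
  (continuous_abs.comp continuous_cos).max (continuous_abs.comp continuous_sin) |>.inv₀
    fun θ ↦ (max_abs_cos_abs_sin_pos θ).ne'

lemma squareRadius_periodic : Function.Periodic squareRadius (2 * π) := by
  intro θ
  simp only [squareRadius, cos_add_two_pi, sin_add_two_pi]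

lemma squareRadius_sq (θ : ℝ) : squareRadius θ ^ 2 = 2 / (1 + |cos (2 * θ)|) := by
  rw [squareRadius, inv_pow, max_abs_cos_abs_sin_sq, inv_div]

lemma squareRadius_add_pi_div_four_sq (θ : ℝ) :
    squareRadius (θ + π / 4) ^ 2 = 2 / (1 + |sin (2 * θ)|) := by
  rw [squareRadius_sq, mul_add, show 2 * (π / 4) = π / 2 by ring, cos_add_pi_div_two, abs_neg]

lemma squareRadius_mem_Icc (θ : ℝ) : squareRadius θ ∈ Icc 1 √2 := by
  have hc0 := abs_nonneg (cos (2 * θ))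
  have hc1 := abs_cos_le_one (2 * θ)
  constructor
  · rw [← sq_le_sq₀ zero_le_one (squareRadius_nonneg θ), squareRadius_sq, one_pow,
      le_div_iff₀ (by positivity)]
    linarith
  · rw [← sq_le_sq₀ (squareRadius_nonneg θ) (sqrt_nonneg 2), squareRadius_sq,
      sq_sqrt zero_le_two]
    exact div_le_self zero_le_two (by linarith)

lemma squareRadius_le_of_le_abs_cos {θ : ℝ} (h : √2 / 2 ≤ |cos (2 * θ)|) :
    squareRadius θ ≤ 1 / cos (π / 8) := by
  rw [← sq_le_sq₀ (squareRadius_nonneg θ) one_div_cos_pi_div_eight_pos.le, squareRadius_sq,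
    one_div_cos_pi_div_eight_sq]
  gcongr

lemma le_squareRadius_of_abs_cos_le {θ : ℝ} (h : |cos (2 * θ)| ≤ √2 / 2) :
    1 / cos (π / 8) ≤ squareRadius θ := by
  rw [← sq_le_sq₀ one_div_cos_pi_div_eight_pos.le (squareRadius_nonneg θ), squareRadius_sq,
    one_div_cos_pi_div_eight_sq]
  gcongr

lemma squareRadius_zero : squareRadius 0 = 1 := by simp [squareRadius]

lemma squareRadius_pi_div_four : squareRadius (π / 4) = √2 := by
  rw [← sq_eq_sq₀ (squareRadius_nonneg _) (sqrt_nonneg 2), ← zero_add (π / 4),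
    squareRadius_add_pi_div_four_sq, sq_sqrt zero_le_two]
  simp

lemma squareRadius_pi_div_eight : squareRadius (π / 8) = 1 / cos (π / 8) := by
  rw [← sq_eq_sq₀ (squareRadius_nonneg _) one_div_cos_pi_div_eight_pos.le,
    squareRadius_sq, one_div_cos_pi_div_eight_sq, show 2 * (π / 8) = π / 4 by ring,
    cos_pi_div_four, abs_of_pos (by positivity)]

lemma squareRadius_pi_div_eight_add_pi_div_four :
    squareRadius (π / 8 + π / 4) = 1 / cos (π / 8) := by
  rw [← sq_eq_sq₀ (squareRadius_nonneg _) one_div_cos_pi_div_eight_pos.le,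
    squareRadius_add_pi_div_four_sq, one_div_cos_pi_div_eight_sq,
    show 2 * (π / 8) = π / 4 by ring, sin_pi_div_four, abs_of_pos (by positivity)]

lemma polarCoord_symm_mem_square_iff {r t : ℝ} (θ : ℝ) (hr : 0 < r) :
    polarCoord.symm (r, θ) ∈ Icc (-t) t ×ˢ Icc (-t) t ↔ r ≤ t * squareRadius θ := by
  rw [polarCoord_symm_apply, mem_prod, mem_Icc, mem_Icc, ← abs_le, ← abs_le, abs_mul, abs_mul,
    abs_of_pos hr, ← max_le_iff, ← mul_max_of_nonneg _ _ hr.le, squareRadius,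
    le_mul_inv_iff₀ (max_abs_cos_abs_sin_pos θ)]

lemma sq_integral_exp_neg_sq_div_two {t : ℝ} (ht : 0 ≤ t) :
    (∫ x in (-t)..t, exp (-x ^ 2 / 2)) ^ 2 =
      ∫ θ in (-π)..π, (1 - exp (-squareRadius θ ^ 2 * t ^ 2 / 2)) := by
  have hsquare : ∫ p in Icc (-t) t ×ˢ Icc (-t) t, exp (-(p.1 ^ 2 + p.2 ^ 2) / 2) =
      ∫ θ in (-π)..π, (1 - exp (-(t * squareRadius θ) ^ 2 / 2)) :=
    setIntegral_exp_neg_sq_of_radial (measurableSet_Icc.prod measurableSet_Icc)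
      (continuous_const.mul continuous_squareRadius).measurable
      (fun θ _ ↦ mul_nonneg ht (squareRadius_nonneg θ))
      (fun r θ hr _ ↦ polarCoord_symm_mem_square_iff θ hr)
  calc (∫ x in (-t)..t, exp (-x ^ 2 / 2)) ^ 2
      = (∫ x in Icc (-t) t, exp (-x ^ 2 / 2)) * ∫ x in Icc (-t) t, exp (-x ^ 2 / 2) := by
        rw [intervalIntegral.integral_of_le (by linarith), ← integral_Icc_eq_integral_Ioc, sq]
    _ = ∫ p in Icc (-t) t ×ˢ Icc (-t) t, exp (-p.1 ^ 2 / 2) * exp (-p.2 ^ 2 / 2) :=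
        (setIntegral_prod_mul _ _ _ _).symm
    _ = ∫ p in Icc (-t) t ×ˢ Icc (-t) t, exp (-(p.1 ^ 2 + p.2 ^ 2) / 2) := by
        congr 1 with p
        rw [← exp_add]
        ring_nf
    _ = ∫ θ in (-π)..π, (1 - exp (-squareRadius θ ^ 2 * t ^ 2 / 2)) := by
        rw [hsquare]
        congr 1 with θ
        ring_nf

/-! `octagonRadius` and `starRadius` are the radial functions of the intersection and the union
of `[-1, 1]²` with its rotation by `π/4`. -/

noncomputable def octagonRadius (θ : ℝ) : ℝ := min (squareRadius θ) (squareRadius (θ + π / 4))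

noncomputable def starRadius (θ : ℝ) : ℝ := max (squareRadius θ) (squareRadius (θ + π / 4))

@[fun_prop]
lemma continuous_octagonRadius : Continuous octagonRadius :=
  continuous_squareRadius.min (continuous_squareRadius.comp (continuous_add_const _))

@[fun_prop]
lemma continuous_starRadius : Continuous starRadius :=
  continuous_squareRadius.max (continuous_squareRadius.comp (continuous_add_const _))

lemma octagonRadius_le (θ : ℝ) : octagonRadius θ ≤ 1 / cos (π / 8) := by
  by_cases h : √2 / 2 ≤ |cos (2 * θ)|
  · exact min_le_of_left_le (squareRadius_le_of_le_abs_cos h)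
  · rw [← abs_sin_le_sqrt_two_div_two_iff, not_le] at h
    refine min_le_of_right_le (squareRadius_le_of_le_abs_cos ?_)
    rw [mul_add, show 2 * (π / 4) = π / 2 by ring, cos_add_pi_div_two, abs_neg]
    exact h.le

lemma le_starRadius (θ : ℝ) : 1 / cos (π / 8) ≤ starRadius θ := by
  by_cases h : |sin (2 * θ)| ≤ √2 / 2
  · refine le_max_of_le_right (le_squareRadius_of_abs_cos_le ?_)
    rwa [mul_add, show 2 * (π / 4) = π / 2 by ring, cos_add_pi_div_two, abs_neg]
  · rw [abs_sin_le_sqrt_two_div_two_iff, not_le] at h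
    exact le_max_of_le_left (le_squareRadius_of_abs_cos_le h.le)

lemma octagonRadius_mem_Icc (θ : ℝ) : octagonRadius θ ∈ Icc 1 (1 / cos (π / 8)) :=
  ⟨le_min (squareRadius_mem_Icc θ).1 (squareRadius_mem_Icc _).1, octagonRadius_le θ⟩

lemma starRadius_mem_Icc (θ : ℝ) : starRadius θ ∈ Icc (1 / cos (π / 8)) √2 :=
  ⟨le_starRadius θ, max_le (squareRadius_mem_Icc θ).2 (squareRadius_mem_Icc _).2⟩

lemma octagonRadius_zero : octagonRadius 0 = 1 := by
  rw [octagonRadius, zero_add, squareRadius_zero, squareRadius_pi_div_four]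
  exact min_eq_left (one_le_sqrt.2 one_le_two)

lemma starRadius_zero : starRadius 0 = √2 := by
  rw [starRadius, zero_add, squareRadius_zero, squareRadius_pi_div_four]
  exact max_eq_right (one_le_sqrt.2 one_le_two)

lemma octagonRadius_pi_div_eight : octagonRadius (π / 8) = 1 / cos (π / 8) := by
  rw [octagonRadius, squareRadius_pi_div_eight, squareRadius_pi_div_eight_add_pi_div_four, min_self]

lemma starRadius_pi_div_eight : starRadius (π / 8) = 1 / cos (π / 8) := by
  rw [starRadius, squareRadius_pi_div_eight, squareRadius_pi_div_eight_add_pi_div_four, max_self]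

lemma intervalIntegral_comp_add_right_of_periodic {f : ℝ → ℝ} {a b : ℝ}
    (hf : Function.Periodic f (b - a)) (c : ℝ) :
    ∫ x in a..b, f (x + c) = ∫ x in a..b, f x := by
  have h := hf.intervalIntegral_add_eq (a + c) a
  rwa [show a + c + (b - a) = b + c by ring, add_sub_cancel,
    ← intervalIntegral.integral_comp_add_right] at h

lemma P_sq_eq {t : ℝ} (ht : 0 ≤ t) :
    P t ^ 2 = 1 - 1 / 2 * ((⨍ θ in (-π)..π, exp (-octagonRadius θ ^ 2 * t ^ 2 / 2)) +
      ⨍ θ in (-π)..π, exp (-starRadius θ ^ 2 * t ^ 2 / 2)) := by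
  set f : ℝ → ℝ := fun k ↦ exp (-k ^ 2 * t ^ 2 / 2)
  change P t ^ 2 = 1 - 1 / 2 * ((⨍ θ in (-π)..π, f (octagonRadius θ)) +
    ⨍ θ in (-π)..π, f (starRadius θ))
  have hint {ρ : ℝ → ℝ} (hρ : Continuous ρ) : IntervalIntegrable (fun θ ↦ f (ρ θ)) volume (-π) π :=
    (by fun_prop : Continuous fun θ ↦ f (ρ θ)).intervalIntegrable _ _
  have hperiodic : Function.Periodic (fun θ ↦ f (squareRadius θ)) (π - -π) := by
    rw [show π - -π = 2 * π by ring]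
    exact squareRadius_periodic.comp f
  have hsum : ∫ θ in (-π)..π, (f (octagonRadius θ) + f (starRadius θ)) =
      2 * ∫ θ in (-π)..π, f (squareRadius θ) := by
    simp_rw [octagonRadius, starRadius, apply_min_add_apply_max f]
    rw [intervalIntegral.integral_add (hint continuous_squareRadius)
      (hint (ρ := fun θ ↦ squareRadius (θ + π / 4)) (by fun_prop)),
      intervalIntegral_comp_add_right_of_periodic hperiodic, two_mul]
  have hP : P t ^ 2 = (2 * π)⁻¹ * (2 * π - ∫ θ in (-π)..π, f (squareRadius θ)) := by
    rw [P, mul_pow, sq_integral_exp_neg_sq_div_two ht, intervalIntegral.integral_sub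
      intervalIntegrable_const (hint continuous_squareRadius), intervalIntegral.integral_const,
      div_pow, one_pow, sq_sqrt (by positivity), smul_eq_mul, one_div]
    ring_nf
  rw [hP, interval_average_eq, interval_average_eq, smul_eq_mul, smul_eq_mul, ← mul_add,
    ← intervalIntegral.integral_add (hint continuous_octagonRadius) (hint continuous_starRadius),
    hsum]
  field_simp
  ring

theorem P_sq_two_exp (t : ℝ) (ht : 0 < t) :
    ∃ k₁ k₂ : ℝ, 1 < k₁ ∧ k₁ ≤ 1 / Real.cos (π / 8) ∧
      1 / Real.cos (π / 8) ≤ k₂ ∧ k₂ < Real.sqrt 2 ∧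
      P t ^ 2 = 1 - (1 / 2) * (Real.exp (-k₁ ^ 2 * t ^ 2 / 2) +
        Real.exp (-k₂ ^ 2 * t ^ 2 / 2)) := by
  have hφ := strictAntiOn_exp_neg_sq_mul_sq ht.ne'
  have hφc : Continuous fun k : ℝ ↦ exp (-k ^ 2 * t ^ 2 / 2) := by fun_prop
  have hπ8 : π / 8 ∈ Icc (-π) π := ⟨by linarith [pi_pos], by linarith [pi_pos]⟩
  have h0 : (0 : ℝ) ∈ Icc (-π) π := ⟨by linarith [pi_pos], pi_pos.le⟩
  have hc := one_div_cos_pi_div_eight_mem_Ioo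
  obtain ⟨k₁, hk₁, hk₁avg⟩ := exists_mem_Ioo_intervalAverage_comp_eq (neg_lt_self pi_pos)
    hφc.continuousOn (hφ.mono fun k hk ↦ zero_le_one.trans hk.1)
    continuous_octagonRadius.continuousOn (fun θ _ ↦ octagonRadius_mem_Icc θ) hπ8 h0
    (by rw [octagonRadius_pi_div_eight]; exact hc.1) (by rw [octagonRadius_zero]; exact hc.1)
  obtain ⟨k₂, hk₂, hk₂avg⟩ := exists_mem_Ioo_intervalAverage_comp_eq (neg_lt_self pi_pos)
    hφc.continuousOn (hφ.mono fun k hk ↦ (zero_le_one.trans hc.1.le).trans hk.1)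
    continuous_starRadius.continuousOn (fun θ _ ↦ starRadius_mem_Icc θ) h0 hπ8
    (by rw [starRadius_zero]; exact hc.2) (by rw [starRadius_pi_div_eight]; exact hc.2)
  refine ⟨k₁, k₂, hk₁.1, hk₁.2.le, hk₂.1.le, hk₂.2, ?_⟩
  rw [P_sq_eq ht.le, hk₁avg, hk₂avg]
end

section
/- For all t ≥ 0, (P(t))² = 1 - (4/π) ∫₀^{π/4} exp(-t²/(2cos²φ)) dφ, where P(t) = (1/√(2π)) ∫_{-t}^{t} e^{-x²/2} dx. -/
open Real MeasureTheory

/-!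
Substituting `x = tan φ` turns `∫₀^{π/4} exp (-t² / (2 cos² φ)) dφ` into Feynman's
integral `J t = ∫₀¹ exp (-t² (1 + x²) / 2) / (1 + x²) dx`. Differentiating under the integral
sign and substituting `u = t x` gives `J' t = -exp (-t² / 2) ∫₀ᵗ exp (-u² / 2) du`, so
`(∫₀ᵗ exp (-u² / 2) du)² + 2 J t` is constant, equal to `2 arctan 1 = π / 2` at `t = 0`.
-/

open intervalIntegral Set

theorem integral_neg_self_eq_two_mul_of_even {f : ℝ → ℝ} (hf : ∀ x, f (-x) = f x) {t : ℝ}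
    (hint : IntervalIntegrable f volume 0 t) :
    ∫ x in (-t)..t, f x = 2 * ∫ x in (0:ℝ)..t, f x := by
  have hleft : ∫ x in (-t)..0, f x = ∫ x in (0:ℝ)..t, f x := by
    simpa [hf] using (integral_comp_neg (a := 0) (b := t) f).symm
  have hint' : IntervalIntegrable f volume (-t) 0 := by
    simpa [hf] using ((IntervalIntegrable.iff_comp_neg (f := f)).mp hint).symm
  rw [← integral_add_adjacent_intervals hint' hint, hleft, two_mul]

theorem integral_exp_div_cos_sq_eq_integral_one_add_sq (t : ℝ) :
    ∫ φ in (0:ℝ)..(π / 4), exp (-t ^ 2 / (2 * cos φ ^ 2))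
      = ∫ x in (0:ℝ)..1, exp (-t ^ 2 * (1 + x ^ 2) / 2) / (1 + x ^ 2) := by
  have hcos : ∀ φ ∈ uIcc 0 (π / 4), cos φ ≠ 0 := fun φ hφ => by
    rw [uIcc_of_le (by positivity)] at hφ
    exact (cos_pos_of_mem_Ioo ⟨by linarith [hφ.1, pi_pos], by linarith [hφ.2, pi_pos]⟩).ne'
  have hsubst := integral_comp_mul_deriv (a := 0) (b := π / 4) (f := tan)
    (f' := fun φ => 1 / cos φ ^ 2) (g := fun x => exp (-t ^ 2 * (1 + x ^ 2) / 2) / (1 + x ^ 2))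
    (fun φ hφ => by simpa using hasDerivAt_tan (hcos φ hφ))
    (continuousOn_const.div (by fun_prop) fun φ hφ => pow_ne_zero 2 (hcos φ hφ))
    (by fun_prop (disch := intro x; positivity))
  rw [tan_zero, tan_pi_div_four] at hsubst
  rw [← hsubst]
  refine integral_congr fun φ hφ => ?_
  have hsec : 1 + tan φ ^ 2 = 1 / cos φ ^ 2 := by
    rw [← inv_one_add_tan_sq (hcos φ hφ), one_div, inv_inv]
  have hcosφ : cos φ ≠ 0 := hcos φ hφ
  simp only [Function.comp_apply, hsec]
  field_simp

noncomputable def feynmanGaussian (t : ℝ) : ℝ :=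
  ∫ x in (0:ℝ)..1, exp (-t ^ 2 * (1 + x ^ 2) / 2) / (1 + x ^ 2)

theorem hasDerivAt_exp_neg_sq_mul_div (c s : ℝ) (hc : c ≠ 0) :
    HasDerivAt (fun s => exp (-s ^ 2 * c / 2) / c) (-(s * exp (-s ^ 2 * c / 2))) s := by
  refine ((((hasDerivAt_pow 2 s).fun_neg.mul_const c).div_const 2).exp.div_const c).congr_deriv ?_
  field_simp
  ring

theorem hasDerivAt_feynmanGaussian (t : ℝ) :
    HasDerivAt feynmanGaussian (∫ x in (0:ℝ)..1, -(t * exp (-t ^ 2 * (1 + x ^ 2) / 2))) t := by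
  have hpos : ∀ x : ℝ, 0 < 1 + x ^ 2 := fun x => by positivity
  refine (hasDerivAt_integral_of_dominated_loc_of_deriv_le (𝕜 := ℝ) (μ := volume)
    (a := 0) (b := 1)
    (F := fun s x => exp (-s ^ 2 * (1 + x ^ 2) / 2) / (1 + x ^ 2))
    (F' := fun s x => -(s * exp (-s ^ 2 * (1 + x ^ 2) / 2))) (bound := fun _ => |t| + 1)
    (Metric.ball_mem_nhds t one_pos) (.of_forall fun s => ?_) ?_ ?_ ?_ intervalIntegrable_const
    ?_).2
  · exact Continuous.aestronglyMeasurable (by fun_prop (disch := exact fun x => (hpos x).ne'))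
  · exact Continuous.intervalIntegrable (by fun_prop (disch := exact fun x => (hpos x).ne')) _ _
  · exact Continuous.aestronglyMeasurable (by fun_prop)
  · refine .of_forall fun x _ s hs => ?_
    have hs' : |s| ≤ |t| + 1 := by
      have := abs_sub_abs_le_abs_sub s t
      rw [Metric.mem_ball, dist_eq_norm, norm_eq_abs] at hs
      linarith
    rw [norm_neg, norm_mul, norm_eq_abs, norm_of_nonneg (exp_pos _).le]
    calc |s| * exp (-s ^ 2 * (1 + x ^ 2) / 2) ≤ |s| * 1 := by
          gcongr
          exact exp_le_one_iff.mpr (by nlinarith [sq_nonneg s, sq_nonneg x])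
      _ ≤ |t| + 1 := by linarith
  · exact .of_forall fun x _ s _ => hasDerivAt_exp_neg_sq_mul_div _ s (hpos x).ne'

theorem integral_mul_exp_neg_sq_mul_one_add_sq (t : ℝ) :
    ∫ x in (0:ℝ)..1, t * exp (-t ^ 2 * (1 + x ^ 2) / 2)
      = exp (-t ^ 2 / 2) * ∫ u in (0:ℝ)..t, exp (-u ^ 2 / 2) := by
  have hsplit : ∀ x : ℝ, t * exp (-t ^ 2 * (1 + x ^ 2) / 2)
      = exp (-t ^ 2 / 2) * (t * exp (-(t * x) ^ 2 / 2)) := fun x => by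
    rw [mul_left_comm, ← exp_add]; ring_nf
  simp_rw [hsplit, intervalIntegral.integral_const_mul]
  rw [mul_integral_comp_mul_left (f := fun u => exp (-u ^ 2 / 2)), mul_zero, mul_one]

theorem hasDerivAt_integral_exp_neg_sq_div_two (t : ℝ) :
    HasDerivAt (fun t => ∫ x in (0:ℝ)..t, exp (-x ^ 2 / 2)) (exp (-t ^ 2 / 2)) t :=
  integral_hasDerivAt_right (Continuous.intervalIntegrable (by fun_prop) _ _)
    (Continuous.stronglyMeasurableAtFilter (by fun_prop) _ _) (by fun_prop)

theorem integral_exp_neg_sq_div_two_sq_add_two_mul_feynmanGaussian (t : ℝ) :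
    (∫ x in (0:ℝ)..t, exp (-x ^ 2 / 2)) ^ 2 + 2 * feynmanGaussian t = π / 2 := by
  set F : ℝ → ℝ := fun t => (∫ x in (0:ℝ)..t, exp (-x ^ 2 / 2)) ^ 2 + 2 * feynmanGaussian t
  have hderiv : ∀ s, HasDerivAt F 0 s := fun s => by
    refine (((hasDerivAt_integral_exp_neg_sq_div_two s).fun_pow 2).fun_add
      ((hasDerivAt_feynmanGaussian s).const_mul 2)).congr_deriv ?_
    rw [intervalIntegral.integral_neg, integral_mul_exp_neg_sq_mul_one_add_sq]
    ring
  have hconst : F t = F 0 :=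
    is_const_of_deriv_eq_zero (fun s => (hderiv s).differentiableAt)
      (fun s => (hderiv s).deriv) t 0
  have hJ0 : feynmanGaussian 0 = π / 4 := by simp [feynmanGaussian]
  have hF0 : F 0 = π / 2 := by
    simp only [F, integral_same, hJ0]
    ring
  exact hconst.trans hF0

theorem P_sq_integral_rep_general (t : ℝ) :
    P t ^ 2 = 1 - (4 / π) * ∫ φ in (0:ℝ)..(π / 4),
      Real.exp (-t ^ 2 / (2 * Real.cos φ ^ 2)) := by
  have hsym : ∫ x in (-t)..t, exp (-x ^ 2 / 2) = 2 * ∫ x in (0:ℝ)..t, exp (-x ^ 2 / 2) :=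
    integral_neg_self_eq_two_mul_of_even (fun x => by ring_nf)
      (Continuous.intervalIntegrable (by fun_prop) _ _)
  have hconst := integral_exp_neg_sq_div_two_sq_add_two_mul_feynmanGaussian t
  rw [integral_exp_div_cos_sq_eq_integral_one_add_sq, ← feynmanGaussian, P, hsym, mul_pow,
    mul_pow, eq_sub_of_add_eq hconst, div_pow, one_pow, sq_sqrt (by positivity)]
  field_simp
  ring

theorem P_sq_integral_rep (t : ℝ) (ht : 0 ≤ t) :
    P t ^ 2 = 1 - (4 / π) * ∫ φ in (0:ℝ)..(π / 4),
      Real.exp (-t ^ 2 / (2 * Real.cos φ ^ 2)) :=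
  P_sq_integral_rep_general t
end
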